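/- arXiv:2604.09775 — 2 statements merged into one kernel-verified Lean document; each statement's English description precedes it below -/
import Mathlib

section
/- If {|v_k⟩⟨v_k|}_{k=1}^m is a projective 2-design in dimension d and M is the linear map sending a Hermitian matrix X to the vector with entries M(X)_k = (d/m)·Tr(|v_k⟩⟨v_k| X), then the inverse of the composition M†M acts on Hermitian matrices as (M†M)^{-1}(X) = (m/d)·[(d+1)X − Tr(X)·I]. -/
open Matrix Kronecker BigOperators

noncomputable section

/-- The rank-one projector `|v⟩⟨v|` associated with a vector `v`. -/
def projOf {d : ℕ} (v : Fin d → ℂ) : Matrix (Fin d) (Fin d) ℂ :=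
  Matrix.vecMulVec v (star v)

/-- The swap operator on `ℂ^d ⊗ ℂ^d`. -/
def swapMatrix (d : ℕ) : Matrix (Fin d × Fin d) (Fin d × Fin d) ℂ :=
  Matrix.of fun p q => if p.1 = q.2 ∧ p.2 = q.1 then 1 else 0

/-- A projective 2-design: a family of unit vectors whose average squared
projectors reproduce the Haar average `∫ (|v⟩⟨v|)^{⊗2} dμ(v) = (I + SWAP)/(d(d+1))`. -/
def IsProjective2Design {d m : ℕ} (v : Fin m → Fin d → ℂ) : Prop :=
  (∀ k, star (v k) ⬝ᵥ v k = 1) ∧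
  ((m : ℂ))⁻¹ • (∑ k, projOf (v k) ⊗ₖ projOf (v k)) =
    ((d : ℂ) * ((d : ℂ) + 1))⁻¹ • ((1 : Matrix (Fin d × Fin d) (Fin d × Fin d) ℂ) + swapMatrix d)

/-- The composition `M†M` of the measurement map `M(X)_k = (d/m)·Tr(|v_k⟩⟨v_k| X)`
with its adjoint (w.r.t. the Hilbert–Schmidt inner product):
`M†M(X) = Σ_k (d/m)² Tr(|v_k⟩⟨v_k| X) |v_k⟩⟨v_k|`. -/
def MdagM {d m : ℕ} (v : Fin m → Fin d → ℂ) (X : Matrix (Fin d) (Fin d) ℂ) :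
    Matrix (Fin d) (Fin d) ℂ :=
  ∑ k, (((d : ℂ) / (m : ℂ)) ^ 2 * (projOf (v k) * X).trace) • projOf (v k)

lemma sum_proj_eq {d m : ℕ} (v : Fin m → Fin d → ℂ) (hm : (m : ℂ) ≠ 0)
    (h2 : ((m : ℂ))⁻¹ • (∑ k, projOf (v k) ⊗ₖ projOf (v k)) =
      ((d : ℂ) * ((d : ℂ) + 1))⁻¹ • ((1 : Matrix (Fin d × Fin d) (Fin d × Fin d) ℂ) + swapMatrix d))
    (X : Matrix (Fin d) (Fin d) ℂ) :
    ∑ k, (projOf (v k) * X).trace • projOf (v k)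
      = ((m : ℂ) * ((d : ℂ) * ((d : ℂ) + 1))⁻¹) • (X + X.trace • 1) := by
  have hS : (∑ k, projOf (v k) ⊗ₖ projOf (v k))
      = ((m : ℂ) * ((d : ℂ) * ((d : ℂ) + 1))⁻¹) • (1 + swapMatrix d) := by
    have := congrArg (fun A => (m : ℂ) • A) h2
    simpa [smul_smul, mul_inv_cancel₀ hm, one_smul] using this
  ext a b
  have key : ∀ i j : Fin d, (∑ k, projOf (v k) a b * projOf (v k) i j)
      = ((m : ℂ) * ((d : ℂ) * ((d : ℂ) + 1))⁻¹) *
        ((if a = b ∧ i = j then 1 else 0) + (if a = j ∧ i = b then 1 else 0)) := by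
    intro i j
    have := congrFun (congrFun hS (a, i)) (b, j)
    simpa [Matrix.sum_apply, Matrix.kroneckerMap_apply, Matrix.one_apply, swapMatrix,
      Prod.ext_iff, Matrix.smul_apply, smul_eq_mul] using this
  have lhs : (∑ k, (projOf (v k) * X).trace • projOf (v k)) a b
      = ∑ i, ∑ j, X j i * (∑ k, projOf (v k) a b * projOf (v k) i j) := by
    simp only [Matrix.sum_apply, Matrix.smul_apply, smul_eq_mul, Matrix.trace,
      Matrix.diag, Matrix.mul_apply, Finset.sum_mul, Finset.mul_sum]
    rw [Finset.sum_comm]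
    refine Finset.sum_congr rfl fun i _ => ?_
    rw [Finset.sum_comm]
    refine Finset.sum_congr rfl fun j _ => ?_
    refine Finset.sum_congr rfl fun k _ => ?_
    ring
  rw [lhs]
  simp only [key]
  simp only [mul_add, Finset.sum_add_distrib, mul_ite, mul_one, mul_zero]
  rw [Matrix.smul_apply, Matrix.add_apply, Matrix.smul_apply, Matrix.one_apply]
  simp only [Matrix.trace, Matrix.diag]
  by_cases hab : a = b
  · subst hab
    simp [Finset.sum_ite_eq, Finset.mul_sum, ite_and]
    rw [← Finset.sum_mul]
    ring
  · simp [hab, Finset.sum_ite_eq, ite_and]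
    ring

lemma MdagM_eq {d m : ℕ} (v : Fin m → Fin d → ℂ) (hd : (d : ℂ) ≠ 0) (hm : (m : ℂ) ≠ 0)
    (h2 : ((m : ℂ))⁻¹ • (∑ k, projOf (v k) ⊗ₖ projOf (v k)) =
      ((d : ℂ) * ((d : ℂ) + 1))⁻¹ • ((1 : Matrix (Fin d × Fin d) (Fin d × Fin d) ℂ) + swapMatrix d))
    (X : Matrix (Fin d) (Fin d) ℂ) :
    MdagM v X = ((d : ℂ) / ((m : ℂ) * ((d : ℂ) + 1))) • (X + X.trace • 1) := by
  have hd1 : (d : ℂ) + 1 ≠ 0 := by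
    have : ((d + 1 : ℕ) : ℂ) ≠ 0 := Nat.cast_ne_zero.mpr (Nat.succ_ne_zero d)
    simpa using this
  unfold MdagM
  simp only [mul_smul]
  rw [← Finset.smul_sum, sum_proj_eq v hm h2 X, smul_smul]
  congr 1
  field_simp

/-- If `{|v_k⟩⟨v_k|}` is a projective 2-design in dimension `d`, then
`(M†M)⁻¹(X) = (m/d)·[(d+1)X − Tr(X)·I]` on Hermitian matrices: the map
`X ↦ (m/d)·[(d+1)X − Tr(X)·I]` is a two-sided inverse of `M†M`. -/
theorem MdagM_inverse {d m : ℕ} (hd : 0 < d) (hm : 0 < m)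
    (v : Fin m → Fin d → ℂ) (hv : IsProjective2Design v)
    (X : Matrix (Fin d) (Fin d) ℂ) (hX : X.IsHermitian) :
    MdagM v (((m : ℂ) / (d : ℂ)) •
        (((d : ℂ) + 1) • X - X.trace • (1 : Matrix (Fin d) (Fin d) ℂ))) = X ∧
    ((m : ℂ) / (d : ℂ)) •
        (((d : ℂ) + 1) • MdagM v X - (MdagM v X).trace • (1 : Matrix (Fin d) (Fin d) ℂ)) = X := by
  have hd' : (d : ℂ) ≠ 0 := Nat.cast_ne_zero.mpr hd.ne'
  have hm' : (m : ℂ) ≠ 0 := Nat.cast_ne_zero.mpr hm.ne'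
  have hd1 : (d : ℂ) + 1 ≠ 0 := by
    have : ((d + 1 : ℕ) : ℂ) ≠ 0 := Nat.cast_ne_zero.mpr (Nat.succ_ne_zero d)
    simpa using this
  have hE := MdagM_eq v hd' hm' hv.2
  constructor
  · rw [hE]
    have ht : (((m : ℂ) / (d : ℂ)) • (((d : ℂ) + 1) • X -
        X.trace • (1 : Matrix (Fin d) (Fin d) ℂ))).trace = ((m : ℂ) / (d : ℂ)) * X.trace := by
      simp only [Matrix.trace_smul, Matrix.trace_sub, Matrix.trace_one, smul_eq_mul,
        Fintype.card_fin]
      ring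
    rw [ht]
    ext i j
    simp only [Matrix.smul_apply, Matrix.add_apply, Matrix.sub_apply, Matrix.one_apply,
      smul_eq_mul]
    by_cases h : i = j <;> simp [h] <;> field_simp <;> ring
  · rw [hE]
    have ht : (((d : ℂ) / ((m : ℂ) * ((d : ℂ) + 1))) •
        (X + X.trace • (1 : Matrix (Fin d) (Fin d) ℂ))).trace
        = ((d : ℂ) / (m : ℂ)) * X.trace := by
      simp only [Matrix.trace_smul, Matrix.trace_add, Matrix.trace_one, smul_eq_mul,
        Fintype.card_fin]
      field_simp
      ring
    rw [ht]
    ext i j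
    simp only [Matrix.smul_apply, Matrix.add_apply, Matrix.sub_apply, Matrix.one_apply,
      smul_eq_mul]
    by_cases h : i = j <;> simp [h] <;> field_simp <;> ring
end
end

section
/- Let {|v_k⟩}_{k=1}^m be a projective 2-design on C^d and ρ a density matrix. With X_k = (d+1)|v_k⟩⟨v_k| − I and probabilities p_k = (d/m)·⟨v_k|ρ|v_k⟩, the second moment satisfies E[X_k²] = Σ_k p_k X_k² = (d−1)(I + ρ) + I. -/
open Matrix Kronecker BigOperators ComplexOrder

noncomputable section

/-- The "contract with ρ on the second factor" linear map. -/
def Lmap {d : ℕ} (ρ : Matrix (Fin d) (Fin d) ℂ) :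
    Matrix (Fin d × Fin d) (Fin d × Fin d) ℂ →ₗ[ℂ] Matrix (Fin d) (Fin d) ℂ where
  toFun M := Matrix.of fun i j => ∑ a, ∑ b, M (i, a) (j, b) * ρ b a
  map_add' M N := by
    ext i j
    simp [add_mul, Finset.sum_add_distrib]
  map_smul' c M := by
    ext i j
    simp [Finset.mul_sum, mul_assoc]

lemma Lmap_kron {d : ℕ} (ρ : Matrix (Fin d) (Fin d) ℂ) (w : Fin d → ℂ) :
    Lmap ρ (projOf w ⊗ₖ projOf w) = (star w ⬝ᵥ ρ.mulVec w) • projOf w := by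
  ext i j
  simp only [Lmap, LinearMap.coe_mk, AddHom.coe_mk, Matrix.of_apply, Matrix.smul_apply,
    Matrix.kroneckerMap_apply, projOf, Matrix.vecMulVec_apply, Pi.star_apply,
    dotProduct, Matrix.mulVec, smul_eq_mul]
  rw [Finset.sum_comm]
  conv_rhs => rw [Finset.sum_mul]
  refine Finset.sum_congr rfl fun b _ => ?_
  rw [Finset.mul_sum, Finset.sum_mul]
  refine Finset.sum_congr rfl fun a _ => ?_
  ring

lemma Lmap_one {d : ℕ} (ρ : Matrix (Fin d) (Fin d) ℂ) (hρtr : ρ.trace = 1) :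
    Lmap ρ (1 : Matrix (Fin d × Fin d) (Fin d × Fin d) ℂ) = 1 := by
  ext i j
  simp only [Lmap, LinearMap.coe_mk, AddHom.coe_mk, Matrix.of_apply, Matrix.one_apply,
    Prod.mk.injEq]
  by_cases h : i = j
  · subst h
    simp only [true_and]
    have : ∀ a : Fin d, ∑ b, (if a = b then (1:ℂ) else 0) * ρ b a = ρ a a := by
      intro a
      simp [Finset.sum_ite_eq]
    rw [Finset.sum_congr rfl fun a _ => this a]
    have := hρtr
    simpa [Matrix.trace, Matrix.diag] using this
  · simp [h]
lemma Lmap_swap {d : ℕ} (ρ : Matrix (Fin d) (Fin d) ℂ) :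
    Lmap ρ (swapMatrix d) = ρ := by
  ext i j
  simp only [Lmap, LinearMap.coe_mk, AddHom.coe_mk, Matrix.of_apply, swapMatrix]
  have h1 : ∀ a : Fin d, (∑ b, (if i = b ∧ a = j then (1:ℂ) else 0) * ρ b a) =
      (if a = j then ρ i a else 0) := by
    intro a
    by_cases h : a = j
    · simp [h, Finset.sum_ite_eq]
    · simp [h]
  rw [Finset.sum_congr rfl fun a _ => h1 a]
  simp [Finset.sum_ite_eq, eq_comm]

lemma proj_idem {d : ℕ} (w : Fin d → ℂ) (h : star w ⬝ᵥ w = 1) :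
    projOf w * projOf w = projOf w := by
  ext i j
  simp only [projOf, Matrix.mul_apply, Matrix.vecMulVec_apply, Pi.star_apply]
  have h2 : ∑ k, w i * star (w k) * (w k * star (w j)) =
      (w i * star (w j)) * ∑ k, star (w k) * w k := by
    rw [Finset.mul_sum]; exact Finset.sum_congr rfl fun k _ => by ring
  have h' : ∑ k, star (w k) * w k = 1 := by simpa [dotProduct] using h
  rw [h2, h', mul_one]

lemma trace_projOf {d : ℕ} (w : Fin d → ℂ) (h : star w ⬝ᵥ w = 1) :
    (projOf w).trace = 1 := by
  have h' : ∑ k, star (w k) * w k = 1 := by simpa [dotProduct] using h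
  simp only [projOf, Matrix.trace, Matrix.diag, Matrix.vecMulVec_apply, Pi.star_apply]
  rw [← h']
  exact Finset.sum_congr rfl fun k _ => by ring

/-- For a projective 2-design `{|v_k⟩}` and a density matrix `ρ`, the random matrix
`X_k = (d+1)|v_k⟩⟨v_k| − I` sampled with probability `p_k = (d/m)·⟨v_k|ρ|v_k⟩` has
second moment `E[X_k²] = Σ_k p_k X_k² = (d−1)(I + ρ) + I`. -/
theorem second_moment_ls_estimator {d m : ℕ} (hd : 0 < d) (hm : 0 < m)
    (v : Fin m → Fin d → ℂ) (hv : IsProjective2Design v)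
    (ρ : Matrix (Fin d) (Fin d) ℂ) (hρ : ρ.PosSemidef) (hρtr : ρ.trace = 1) :
    (∑ k, (((d : ℂ) / (m : ℂ)) * (star (v k) ⬝ᵥ ρ.mulVec (v k))) •
        ((((d : ℂ) + 1) • projOf (v k) - (1 : Matrix (Fin d) (Fin d) ℂ)) *
         (((d : ℂ) + 1) • projOf (v k) - (1 : Matrix (Fin d) (Fin d) ℂ))))
      = ((d : ℂ) - 1) • ((1 : Matrix (Fin d) (Fin d) ℂ) + ρ)
          + (1 : Matrix (Fin d) (Fin d) ℂ) := by
  have hd0 : (d:ℂ) ≠ 0 := Nat.cast_ne_zero.mpr hd.ne'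
  have hd1 : (d:ℂ) + 1 ≠ 0 := by
    have : ((d+1 : ℕ):ℂ) ≠ 0 := Nat.cast_ne_zero.mpr (Nat.succ_ne_zero d)
    simpa using this
  have hkey : (m:ℂ)⁻¹ • ∑ k, (star (v k) ⬝ᵥ ρ.mulVec (v k)) • projOf (v k)
      = ((d:ℂ)*((d:ℂ)+1))⁻¹ • ((1 : Matrix (Fin d) (Fin d) ℂ) + ρ) := by
    have h := congrArg (Lmap ρ) hv.2
    simpa [_root_.map_smul, map_sum, map_add, Lmap_kron, Lmap_one ρ hρtr, Lmap_swap] using h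
  have keyA : (∑ k, (((d:ℂ)/(m:ℂ)) * (star (v k) ⬝ᵥ ρ.mulVec (v k))) • projOf (v k))
      = ((d:ℂ)+1)⁻¹ • ((1 : Matrix (Fin d) (Fin d) ℂ) + ρ) := by
    have h1 : (∑ k, (((d:ℂ)/(m:ℂ)) * (star (v k) ⬝ᵥ ρ.mulVec (v k))) • projOf (v k))
        = (d:ℂ) • ((m:ℂ)⁻¹ • ∑ k, (star (v k) ⬝ᵥ ρ.mulVec (v k)) • projOf (v k)) := by
      rw [Finset.smul_sum, Finset.smul_sum]
      refine Finset.sum_congr rfl fun k _ => ?_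
      rw [smul_smul, smul_smul, div_eq_mul_inv]
    rw [h1, hkey, smul_smul]
    congr 1
    field_simp
  have keyB : (∑ k, (((d:ℂ)/(m:ℂ)) * (star (v k) ⬝ᵥ ρ.mulVec (v k)))) = 1 := by
    have htr : ∀ k, (projOf (v k)).trace = 1 := fun k => trace_projOf (v k) (hv.1 k)
    have h := congrArg Matrix.trace keyA
    simp only [Matrix.trace_sum, Matrix.trace_smul, smul_eq_mul, Matrix.trace_add,
      Matrix.trace_one, hρtr, htr, mul_one, Fintype.card_fin] at h
    rw [h]
    field_simp
  have hX : ∀ k, ((((d:ℂ)+1) • projOf (v k) - 1) * (((d:ℂ)+1) • projOf (v k) - 1))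
      = ((d:ℂ)*(d:ℂ) - 1) • projOf (v k) + 1 := by
    intro k
    rw [sub_mul, mul_sub, mul_sub, smul_mul_assoc, mul_smul_comm,
      proj_idem (v k) (hv.1 k), one_mul, mul_one, smul_smul]
    simp only [one_mul, mul_one]
    have hc : (d:ℂ)*(d:ℂ) - 1 = ((d:ℂ)+1)*((d:ℂ)+1) - ((d:ℂ)+1) - ((d:ℂ)+1) := by ring
    rw [hc, sub_smul, sub_smul]
    abel
  calc (∑ k, (((d : ℂ) / (m : ℂ)) * (star (v k) ⬝ᵥ ρ.mulVec (v k))) •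
        ((((d : ℂ) + 1) • projOf (v k) - (1 : Matrix (Fin d) (Fin d) ℂ)) *
         (((d : ℂ) + 1) • projOf (v k) - (1 : Matrix (Fin d) (Fin d) ℂ))))
      = ∑ k, (((d:ℂ)*(d:ℂ) - 1) • ((((d : ℂ) / (m : ℂ)) * (star (v k) ⬝ᵥ ρ.mulVec (v k))) • projOf (v k))
          + (((d : ℂ) / (m : ℂ)) * (star (v k) ⬝ᵥ ρ.mulVec (v k))) • (1 : Matrix (Fin d) (Fin d) ℂ)) := by
        refine Finset.sum_congr rfl fun k _ => ?_
        rw [hX k, smul_add, smul_comm]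
    _ = ((d:ℂ)*(d:ℂ) - 1) • (∑ k, (((d : ℂ) / (m : ℂ)) * (star (v k) ⬝ᵥ ρ.mulVec (v k))) • projOf (v k))
          + (∑ k, (((d : ℂ) / (m : ℂ)) * (star (v k) ⬝ᵥ ρ.mulVec (v k)))) • (1 : Matrix (Fin d) (Fin d) ℂ) := by
        rw [Finset.sum_add_distrib, Finset.smul_sum, Finset.sum_smul]
    _ = ((d : ℂ) - 1) • ((1 : Matrix (Fin d) (Fin d) ℂ) + ρ) + (1 : Matrix (Fin d) (Fin d) ℂ) := by
        rw [keyA, keyB, one_smul, smul_smul]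
        congr 2
        field_simp
        ring
end
end
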